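/- Let J = (x_0·x_2, x_1·x_2, x_0·x_1·(x_0-x_1)) ⊂ k[x_0,x_1,x_2] and let I = (x_0^3, x_0^2·x_1, x_0·x_1^2, x_1^3, x_0·x_2, x_1·x_2, x_2^2) be its Jacobian ideal. Then the pair (J, I) is Aluffi torsion-free: J ∩ I^t ⊆ J·I^{t-1} for all t ≥ 2. -/

import Mathlib

/-!
Both `Iᵗ` and `(x₀, x₁) ⊇ J` are monomial ideals. Split `g ∈ J ∩ Iᵗ` as `g₀ + (g - g₀)` with
`g₀ = g(x₀, x₁, 0)`. Every monomial of `g - g₀` lies in `Iᵗ` and is divisible by `x₂` and by `x₀`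
or `x₁`, hence lies in `x₂ (x₀, x₁) Iᵗ⁻¹ ⊆ J Iᵗ⁻¹`. On the other hand `g₀` lies in the image of `J`
under `x₂ ↦ 0`, which is `(f)` for `f = x₀x₁(x₀ - x₁)`; so `g₀ = f q`. As `g₀` has order `≥ 3t` in
`x₀, x₁`, and this order is additive with `f` of order `3`, `q ∈ (x₀, x₁)^{3t-3} ⊆ Iᵗ⁻¹`.
-/

open MvPolynomial

namespace MvPolynomial

variable {σ R : Type*} [CommSemiring R]

noncomputable def monomialIdeal (S : Set (σ →₀ ℕ)) : Ideal (MvPolynomial σ R) :=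
  Ideal.span ((monomial · 1) '' S)

variable {S T U : Set (σ →₀ ℕ)} {p : MvPolynomial σ R}

theorem mem_monomialIdeal (hS : IsUpperSet S) :
    p ∈ monomialIdeal S ↔ ∀ μ ∈ p.support, μ ∈ S := by
  refine mem_ideal_span_monomial_image.trans ⟨fun h μ hμ => ?_, fun h μ hμ => ⟨μ, h μ hμ, le_rfl⟩⟩
  obtain ⟨ν, hν, hle⟩ := h μ hμ
  exact hS hle hν

theorem monomial_mem_monomialIdeal {μ : σ →₀ ℕ} (hμ : μ ∈ S) (r : R) :
    monomial μ r ∈ monomialIdeal S := by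
  rw [← mul_one r, ← C_mul_monomial]
  exact Ideal.mul_mem_left _ _ (Ideal.subset_span ⟨μ, hμ, rfl⟩)

theorem mem_of_forall_monomial_mem {K : Ideal (MvPolynomial σ R)}
    (h : ∀ μ ∈ p.support, monomial μ 1 ∈ K) : p ∈ K := by
  rw [← support_sum_monomial_coeff p]
  refine Ideal.sum_mem _ fun μ hμ => ?_
  rw [← mul_one (coeff μ p), ← C_mul_monomial]
  exact Ideal.mul_mem_left _ _ (h μ hμ)

theorem monomial_mem_mul_of_le {K L : Ideal (MvPolynomial σ R)} {μ ν : σ →₀ ℕ} (hle : ν ≤ μ)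
    (hν : monomial ν 1 ∈ K) (hμν : monomial (μ - ν) 1 ∈ L) : monomial μ (1 : R) ∈ K * L := by
  have := Ideal.mul_mem_mul hν hμν
  rwa [monomial_mul, one_mul, add_tsub_cancel_of_le hle] at this

theorem monomialIdeal_le {K : Ideal (MvPolynomial σ R)} (h : ∀ μ ∈ S, monomial μ 1 ∈ K) :
    monomialIdeal S ≤ K :=
  Ideal.span_le.mpr (Set.image_subset_iff.mpr h)

theorem monomialIdeal_mono (h : S ⊆ T) :
    (monomialIdeal S : Ideal (MvPolynomial σ R)) ≤ monomialIdeal T :=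
  Ideal.span_mono (Set.image_mono h)

theorem monomialIdeal_mul_le (h : ∀ μ ∈ S, ∀ ν ∈ T, μ + ν ∈ U) :
    (monomialIdeal S * monomialIdeal T : Ideal (MvPolynomial σ R)) ≤ monomialIdeal U := by
  rw [monomialIdeal, monomialIdeal, Ideal.span_mul_span', Ideal.span_le]
  rintro _ ⟨_, ⟨μ, hμ, rfl⟩, _, ⟨ν, hν, rfl⟩, rfl⟩
  exact Ideal.subset_span ⟨_, h μ hμ ν hν, by simp only [monomial_mul, one_mul]⟩

theorem isUpperSet_le_weight (w : σ → ℕ) (n : ℕ) :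
    IsUpperSet {μ : σ →₀ ℕ | n ≤ Finsupp.weight w μ} := by
  intro μ ν hle hμ
  obtain ⟨d, rfl⟩ := le_iff_exists_add.mp hle
  change n ≤ Finsupp.weight w (μ + d)
  rw [map_add]
  exact le_add_right hμ

theorem mem_monomialIdeal_le_weight_iff {w : σ → ℕ} {n : ℕ} :
    p ∈ monomialIdeal {μ | n ≤ Finsupp.weight w μ} ↔
      (n : ℕ∞) ≤ (p : MvPowerSeries σ R).weightedOrder w := by
  rw [mem_monomialIdeal (isUpperSet_le_weight w n)]
  constructor
  · refine fun h => MvPowerSeries.nat_le_weightedOrder w fun μ hμ => ?_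
    rw [coeff_coe, ← notMem_support_iff]
    exact fun hsupp => (h μ hsupp).not_gt hμ
  · intro h μ hμ
    rw [mem_support_iff, ← coeff_coe] at hμ
    exact_mod_cast (h.trans (MvPowerSeries.weightedOrder_le w hμ))

theorem mem_monomialIdeal_le_weight_of_mul_mem [NoZeroDivisors R] {w : σ → ℕ} {m n : ℕ}
    {f q : MvPolynomial σ R} (hf : (f : MvPowerSeries σ R).weightedOrder w ≤ m)
    (h : f * q ∈ monomialIdeal {μ | m + n ≤ Finsupp.weight w μ}) :
    q ∈ monomialIdeal {μ | n ≤ Finsupp.weight w μ} := by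
  rw [mem_monomialIdeal_le_weight_iff] at h ⊢
  rw [coe_mul, MvPowerSeries.weightedOrder_mul] at h
  generalize (f : MvPowerSeries σ R).weightedOrder w = a at hf h
  generalize (q : MvPowerSeries σ R).weightedOrder w = b at h ⊢
  induction b using ENat.recTopCoe with
  | top => exact le_top
  | coe b =>
    lift a to ℕ using ne_top_of_le_ne_top (ENat.natCast_ne_top m) hf
    norm_cast at *
    omega

theorem aeval_update_X_zero_monomial [DecidableEq σ] (i : σ) (ν : σ →₀ ℕ) (r : R) :
    aeval (Function.update X i 0) (monomial ν r) = if ν i = 0 then monomial ν r else 0 := by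
  rw [aeval_monomial, algebraMap_eq]
  split_ifs with h
  · rw [monomial_eq]
    congr 1
    refine Finsupp.prod_congr fun j hj => ?_
    rw [Function.update_of_ne (ne_of_mem_of_not_mem hj (Finsupp.notMem_support_iff.mpr h))]
  · rw [Finsupp.prod, Finset.prod_eq_zero (Finsupp.mem_support_iff.mpr h), mul_zero]
    rw [Function.update_self, zero_pow h]

theorem coeff_aeval_update_X_zero [DecidableEq σ] (i : σ) (μ : σ →₀ ℕ) (p : MvPolynomial σ R) :
    coeff μ (aeval (Function.update X i 0) p) = if μ i = 0 then coeff μ p else 0 := by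
  induction p using MvPolynomial.induction_on' with
  | monomial ν r =>
    rw [aeval_update_X_zero_monomial]
    split_ifs with hν hμ hμ
    · rfl
    · rw [coeff_monomial, if_neg (by rintro rfl; exact hμ hν)]
    · rw [coeff_zero, coeff_monomial, if_neg (by rintro rfl; exact hν hμ)]
    · rfl
  | add p q hp hq =>
    rw [map_add, coeff_add, coeff_add, hp, hq]
    split_ifs <;> simp

end MvPolynomial

namespace FourPoints

open Finsupp

variable (k : Type*) [CommRing k]

noncomputable def cubic : MvPolynomial (Fin 3) k := X 0 * X 1 * (X 0 - X 1)

noncomputable def pointsIdeal : Ideal (MvPolynomial (Fin 3) k) :=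
  Ideal.span {X 0 * X 2, X 1 * X 2, X 0 * X 1 * (X 0 - X 1)}

noncomputable def jacobianIdeal : Ideal (MvPolynomial (Fin 3) k) :=
  Ideal.span {X 0 ^ 3, X 0 ^ 2 * X 1, X 0 * X 1 ^ 2, X 1 ^ 3, X 0 * X 2, X 1 * X 2, X 2 ^ 2}

def jacobianExponents : Set (Fin 3 →₀ ℕ) :=
  {single 0 3, single 0 2 + single 1 1, single 0 1 + single 1 2, single 1 3,
    single 0 1 + single 2 1, single 1 1 + single 2 1, single 2 2}

/-- Since `I = (x₀, x₁)³ + x₂ (x₀, x₁) + (x₂²)`, the power `Iᵗ` is the monomial ideal cut out by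
the weights `(1, 1, 2) ≥ 3t` and `(1, 1, 1) ≥ 2t`. -/
def powExponents (t : ℕ) : Set (Fin 3 →₀ ℕ) :=
  {μ | 3 * t ≤ μ 0 + μ 1 + 2 * μ 2 ∧ 2 * t ≤ μ 0 + μ 1 + μ 2}

def xyWeight : Fin 3 → ℕ := ![1, 1, 0]

theorem weight_xyWeight (μ : Fin 3 →₀ ℕ) : weight xyWeight μ = μ 0 + μ 1 := by
  simp [xyWeight, weight_eq_sum, Fin.sum_univ_three]

theorem isUpperSet_powExponents (t : ℕ) : IsUpperSet (powExponents t) := by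
  rintro μ ν hle ⟨h₁, h₂⟩
  have := le_def.mp hle 0
  have := le_def.mp hle 1
  have := le_def.mp hle 2
  constructor <;> omega

theorem jacobianIdeal_eq_monomialIdeal :
    jacobianIdeal k = monomialIdeal jacobianExponents := by
  simp only [jacobianIdeal, monomialIdeal, jacobianExponents, Set.image_insert_eq,
    Set.image_singleton, X, monomial_pow, monomial_mul, one_pow, mul_one, smul_single, smul_eq_mul]

theorem jacobianExponents_subset : jacobianExponents ⊆ powExponents 1 := by
  simp [jacobianExponents, powExponents, Set.insert_subset_iff]

theorem exists_jacobianExponent_le {s : ℕ} {μ : Fin 3 →₀ ℕ} (hμ : μ ∈ powExponents (s + 1)) :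
    ∃ ν ∈ jacobianExponents, ν ≤ μ ∧ μ - ν ∈ powExponents s := by
  obtain ⟨h₁, h₂⟩ := hμ
  rcases (by omega : μ 2 = 0 ∧ 3 ≤ μ 0 ∨ μ 2 = 0 ∧ μ 0 = 2 ∨ μ 2 = 0 ∧ μ 0 = 1 ∨ μ 2 = 0 ∧ μ 0 = 0 ∨
      μ 2 ≠ 0 ∧ μ 0 ≠ 0 ∨ μ 2 ≠ 0 ∧ μ 0 = 0 ∧ μ 1 ≠ 0 ∨ μ 0 = 0 ∧ μ 1 = 0) with
    h | h | h | h | h | h | h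
  on_goal 1 => refine ⟨single 0 3, by simp [jacobianExponents], ?_⟩
  on_goal 2 => refine ⟨single 0 2 + single 1 1, by simp [jacobianExponents], ?_⟩
  on_goal 3 => refine ⟨single 0 1 + single 1 2, by simp [jacobianExponents], ?_⟩
  on_goal 4 => refine ⟨single 1 3, by simp [jacobianExponents], ?_⟩
  on_goal 5 => refine ⟨single 0 1 + single 2 1, by simp [jacobianExponents], ?_⟩
  on_goal 6 => refine ⟨single 1 1 + single 2 1, by simp [jacobianExponents], ?_⟩
  on_goal 7 => refine ⟨single 2 2, by simp [jacobianExponents], ?_⟩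
  all_goals simp [Finsupp.le_def, Fin.forall_fin_succ, powExponents, single_apply]; omega

theorem jacobianIdeal_pow (t : ℕ) : jacobianIdeal k ^ t = monomialIdeal (powExponents t) := by
  induction t with
  | zero =>
    rw [pow_zero, Ideal.one_eq_top, eq_comm, Ideal.eq_top_iff_one, ← C_1, ← monomial_zero']
    exact monomial_mem_monomialIdeal (by simp [powExponents]) 1
  | succ s ih =>
    rw [pow_succ', ih, jacobianIdeal_eq_monomialIdeal]
    refine le_antisymm (monomialIdeal_mul_le fun μ hμ ν hν => ?_) (monomialIdeal_le fun μ hμ => ?_)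
    · obtain ⟨h₁, h₂⟩ := jacobianExponents_subset hμ
      obtain ⟨h₃, h₄⟩ := hν
      constructor <;> simp only [Finsupp.add_apply] <;> omega
    · obtain ⟨ν, hν, hle, hμν⟩ := exists_jacobianExponent_le hμ
      exact monomial_mem_mul_of_le hle (monomial_mem_monomialIdeal hν 1)
        (monomial_mem_monomialIdeal hμν 1)

theorem cubic_mem_pointsIdeal : cubic k ∈ pointsIdeal k :=
  Ideal.subset_span (by simp [cubic])

theorem pointsIdeal_le_monomialIdeal :
    pointsIdeal k ≤ monomialIdeal {μ | 1 ≤ weight xyWeight μ} := by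
  have hX : ∀ i : Fin 3, i ≠ 2 →
      (X i : MvPolynomial (Fin 3) k) ∈ monomialIdeal {μ | 1 ≤ weight xyWeight μ} := fun i hi =>
    monomial_mem_monomialIdeal (by fin_cases i <;> simp_all [weight_xyWeight]) 1
  rw [pointsIdeal, Ideal.span_le]
  simp only [Set.insert_subset_iff, Set.singleton_subset_iff, SetLike.mem_coe]
  refine ⟨Ideal.mul_mem_right _ _ (hX 0 (by decide)), Ideal.mul_mem_right _ _ (hX 1 (by decide)),
    Ideal.mul_mem_right _ _ (Ideal.mul_mem_right _ _ (hX 0 (by decide)))⟩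

theorem monomial_mem_pointsIdeal_mul {s : ℕ} {μ : Fin 3 →₀ ℕ} (hμ : μ ∈ powExponents (s + 1))
    (h₂ : μ 2 ≠ 0) (h₀₁ : 1 ≤ weight xyWeight μ) :
    monomial μ 1 ∈ pointsIdeal k * jacobianIdeal k ^ s := by
  rw [weight_xyWeight] at h₀₁
  obtain ⟨h₃, h₄⟩ := hμ
  rw [jacobianIdeal_pow]
  rcases (by omega : μ 0 ≠ 0 ∨ μ 1 ≠ 0) with h | h
  · refine monomial_mem_mul_of_le (ν := single 0 1 + single 2 1) ?_
      (Ideal.subset_span ?_) (monomial_mem_monomialIdeal (R := k) ?_ 1) <;>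
    simp [le_def, Fin.forall_fin_succ, single_apply, powExponents, X, monomial_mul] <;> omega
  · refine monomial_mem_mul_of_le (ν := single 1 1 + single 2 1) ?_
      (Ideal.subset_span ?_) (monomial_mem_monomialIdeal (R := k) ?_ 1) <;>
    simp [le_def, Fin.forall_fin_succ, single_apply, powExponents, X, monomial_mul] <;> omega

theorem weightedOrder_cubic_le [Nontrivial k] :
    (cubic k : MvPowerSeries (Fin 3) k).weightedOrder xyWeight ≤ 3 := by
  have h : coeff (single 0 2 + single 1 1) (cubic k) ≠ 0 := by
    simp [cubic, X, mul_sub, monomial_mul, coeff_monomial, Finsupp.ext_iff, Fin.forall_fin_succ]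
  rw [← coeff_coe] at h
  simpa [weight_xyWeight] using MvPowerSeries.weightedOrder_le xyWeight h

theorem map_pointsIdeal_le :
    (pointsIdeal k).map (aeval (Function.update X 2 0)) ≤ Ideal.span {cubic k} := by
  rw [pointsIdeal, Ideal.map_span, Ideal.span_le]
  simp [Set.insert_subset_iff, Function.update_of_ne, cubic]

theorem cubic_mul_mem_pointsIdeal_mul [IsDomain k] {s : ℕ} {q : MvPolynomial (Fin 3) k}
    (h : cubic k * q ∈ monomialIdeal {μ | 3 + 3 * s ≤ weight xyWeight μ}) :
    cubic k * q ∈ pointsIdeal k * jacobianIdeal k ^ s := by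
  refine Ideal.mul_mem_mul (cubic_mem_pointsIdeal k) ?_
  rw [jacobianIdeal_pow]
  refine monomialIdeal_mono (fun μ hμ => ?_)
    (mem_monomialIdeal_le_weight_of_mul_mem (weightedOrder_cubic_le k) h)
  rw [Set.mem_ofPred_eq, weight_xyWeight] at hμ
  constructor <;> omega

theorem pointsIdeal_inf_pow_succ_le [IsDomain k] (s : ℕ) :
    pointsIdeal k ⊓ jacobianIdeal k ^ (s + 1) ≤ pointsIdeal k * jacobianIdeal k ^ s := by
  rintro g ⟨hgJ, hgI⟩
  rw [SetLike.mem_coe, jacobianIdeal_pow, mem_monomialIdeal (isUpperSet_powExponents _)] at hgI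
  have hg₀₁ := (mem_monomialIdeal (isUpperSet_le_weight _ 1)).mp
    (pointsIdeal_le_monomialIdeal k hgJ)
  set g₀ := aeval (Function.update (X (R := k)) 2 0) g
  have hcoeff (μ) : coeff μ g₀ = if μ 2 = 0 then coeff μ g else 0 :=
    coeff_aeval_update_X_zero 2 μ g
  have h₀ : g₀ ∈ pointsIdeal k * jacobianIdeal k ^ s := by
    obtain ⟨q, hq⟩ : ∃ q, cubic k * q = g₀ := Ideal.mem_span_singleton.mp
      (map_pointsIdeal_le k (Ideal.mem_map_of_mem _ hgJ)) |>.imp fun q hq => hq.symm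
    rw [← hq]
    refine cubic_mul_mem_pointsIdeal_mul k ?_
    rw [hq, mem_monomialIdeal (isUpperSet_le_weight _ _)]
    intro μ hμ
    rw [MvPolynomial.mem_support_iff, hcoeff] at hμ
    split_ifs at hμ with h₂
    · obtain ⟨h, -⟩ := hgI μ (MvPolynomial.mem_support_iff.mpr hμ)
      rw [Set.mem_ofPred_eq, weight_xyWeight]
      omega
    · exact absurd rfl hμ
  have h₁ : g - g₀ ∈ pointsIdeal k * jacobianIdeal k ^ s := by
    refine mem_of_forall_monomial_mem fun μ hμ => ?_
    rw [MvPolynomial.mem_support_iff, coeff_sub, hcoeff] at hμ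
    split_ifs at hμ with h₂
    · exact absurd (sub_self _) hμ
    · rw [sub_zero, ← MvPolynomial.mem_support_iff] at hμ
      exact monomial_mem_pointsIdeal_mul k (hgI μ hμ) h₂ (hg₀₁ μ hμ)
  simpa using add_mem h₀ h₁

end FourPoints

/-- For `J = (x₀x₂, x₁x₂, x₀x₁(x₀-x₁)) ⊂ k[x₀,x₁,x₂]` (the ideal of four points
of `ℙ²` in hyperplane linear position) and its Jacobian ideal
`I = (x₀³, x₀²x₁, x₀x₁², x₁³, x₀x₂, x₁x₂, x₂²)`, the pair `(J, I)` is Aluffi torsion-free: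
`J ∩ Iᵗ ⊆ J·I^{t-1}` for all `t ≥ 2`. -/
theorem stmt_13 {k : Type*} [Field k]
    (J I : Ideal (MvPolynomial (Fin 3) k))
    (hJ : J = Ideal.span {X 0 * X 2, X 1 * X 2, X 0 * X 1 * (X 0 - X 1)})
    (hI : I = Ideal.span {X 0 ^ 3, X 0 ^ 2 * X 1, X 0 * X 1 ^ 2, X 1 ^ 3,
      X 0 * X 2, X 1 * X 2, X 2 ^ 2}) :
    ∀ t : ℕ, 2 ≤ t → J ⊓ I ^ t ≤ J * I ^ (t - 1) := by
  subst hJ hI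
  intro t ht
  obtain ⟨s, rfl⟩ : ∃ s, t = s + 1 := ⟨t - 1, by omega⟩
  exact FourPoints.pointsIdeal_inf_pow_succ_le k s
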